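/- arXiv:2309.08830 — 4 statements merged into one kernel-verified Lean document; each statement's English description precedes it below -/
import Mathlib

section
/- For integrable nonnegative functions with n1, n2, n3 ≥ 2, the integral ∫ φ^{⋆n1}(x) φ^{⋆n2}(x) φ^{⋆n3}(x) dx is at most (∫ φ(x) dx)^{n1+n2+n3-6} · ∫ (φ^{⋆2}(x))^3 dx, where φ^{⋆m} denotes the m-fold convolution of φ with itself. -/
open MeasureTheory
open scoped ENNReal

noncomputable def conv {d : ℕ} (f g : EuclideanSpace ℝ (Fin d) → ℝ)
    (x : EuclideanSpace ℝ (Fin d)) : ℝ := ∫ u, f (x - u) * g u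

/-- `iterConv f n` is the `(n+1)`-fold self-convolution of `f`, so `iterConv f 0 = f`. -/
noncomputable def iterConv {d : ℕ} (f : EuclideanSpace ℝ (Fin d) → ℝ) :
    ℕ → EuclideanSpace ℝ (Fin d) → ℝ
  | 0 => f
  | n + 1 => conv (iterConv f n) f

namespace ConvAux

variable {d : ℕ}

local notation "E" => EuclideanSpace ℝ (Fin d)

lemma iterConv_succ (ψ : E → ℝ) (n : ℕ) : iterConv ψ (n + 1) = conv (iterConv ψ n) ψ := rfl

lemma meas_iterConv {ψ : E → ℝ} (hm : Measurable ψ) (n : ℕ) : Measurable (iterConv ψ n) := by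
  induction n with
  | zero => exact hm
  | succ n ih =>
    have h : StronglyMeasurable fun p : E × E => iterConv ψ n (p.1 - p.2) * ψ p.2 :=
      ((ih.comp (measurable_fst.sub measurable_snd)).mul (hm.comp measurable_snd)).stronglyMeasurable
    exact h.integral_prod_right'.measurable

lemma iterConv_nonneg {ψ : E → ℝ} (h0 : ∀ x, 0 ≤ ψ x) (n : ℕ) : ∀ x, 0 ≤ iterConv ψ n x := by
  induction n with
  | zero => exact h0
  | succ n ih =>
    intro x
    exact integral_nonneg fun u => mul_nonneg (ih _) (h0 u)

lemma integrable_kernel {ψ : E → ℝ} (hm : Measurable ψ) (hψ : Integrable ψ) (n : ℕ)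
    (In : Integrable (iterConv ψ n)) :
    Integrable (fun p : E × E => iterConv ψ n (p.1 - p.2) * ψ p.2) (volume.prod volume) := by
  have hmeas : Measurable fun p : E × E => iterConv ψ n (p.1 - p.2) * ψ p.2 :=
    ((meas_iterConv hm n).comp (measurable_fst.sub measurable_snd)).mul (hm.comp measurable_snd)
  refine ⟨hmeas.aestronglyMeasurable, ?_⟩
  show (∫⁻ p, ↑‖iterConv ψ n (p.1 - p.2) * ψ p.2‖₊ ∂(volume.prod volume)) < ⊤
  have key : (∫⁻ p, ↑‖iterConv ψ n (p.1 - p.2) * ψ p.2‖₊ ∂(volume.prod volume))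
      = (∫⁻ x, ↑‖iterConv ψ n x‖₊) * ∫⁻ u, ↑‖ψ u‖₊ := by
    rw [lintegral_prod_symm _ (hmeas.nnnorm.coe_nnreal_ennreal.aemeasurable)]
    have inner : ∀ u : E, (∫⁻ x, ↑‖iterConv ψ n (x - u) * ψ u‖₊)
        = (∫⁻ x, ↑‖iterConv ψ n x‖₊) * ↑‖ψ u‖₊ := by
      intro u
      simp_rw [nnnorm_mul, ENNReal.coe_mul]
      rw [lintegral_mul_const' _ _ ENNReal.coe_ne_top,
        lintegral_sub_right_eq_self (fun x => (‖iterConv ψ n x‖₊ : ℝ≥0∞)) u]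
    simp_rw [inner]
    rw [lintegral_const_mul' (∫⁻ x, ↑‖iterConv ψ n x‖₊) _ In.2.ne]
  rw [key]
  exact ENNReal.mul_lt_top In.2 hψ.2

lemma integrable_iterConv {ψ : E → ℝ} (hm : Measurable ψ) (hψ : Integrable ψ) (n : ℕ) :
    Integrable (iterConv ψ n) := by
  induction n with
  | zero => exact hψ
  | succ n ih => exact (integrable_kernel hm hψ n ih).integral_prod_left


/-- a.e. recursion for the lifted (ℝ≥0∞-valued) iterated convolution -/
lemma rec_ae {ψ : E → ℝ} (hm : Measurable ψ) (hψ : Integrable ψ) (h0 : ∀ x, 0 ≤ ψ x) (n : ℕ) :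
    (fun x => ENNReal.ofReal (iterConv ψ (n + 1) x)) =ᵐ[volume]
      fun x => ∫⁻ u, ENNReal.ofReal (iterConv ψ n (x - u)) * ENNReal.ofReal (ψ u) := by
  filter_upwards [(integrable_kernel hm hψ n (integrable_iterConv hm hψ n)).prod_right_ae]
    with x hx
  show ENNReal.ofReal (∫ u, iterConv ψ n (x - u) * ψ u) = _
  rw [ofReal_integral_eq_lintegral_ofReal hx
    (ae_of_all _ fun u => mul_nonneg (iterConv_nonneg h0 n _) (h0 u))]
  exact lintegral_congr fun u => ENNReal.ofReal_mul (iterConv_nonneg h0 n _)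

lemma meas_LC {ψ : E → ℝ} (hm : Measurable ψ) (n : ℕ) :
    Measurable fun x => ENNReal.ofReal (iterConv ψ n x) :=
  (meas_iterConv hm n).ennreal_ofReal

lemma lintegral_LC {ψ : E → ℝ} (hm : Measurable ψ) (hψ : Integrable ψ) (h0 : ∀ x, 0 ≤ ψ x)
    (n : ℕ) :
    ∫⁻ x, ENNReal.ofReal (iterConv ψ n x) = (∫⁻ x, ENNReal.ofReal (ψ x)) ^ (n + 1) := by
  induction n with
  | zero => simp [iterConv]
  | succ n ih =>
    rw [lintegral_congr_ae (rec_ae hm hψ h0 n)]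
    have hunc : AEMeasurable
        (Function.uncurry fun x u => ENNReal.ofReal (iterConv ψ n (x - u)) * ENNReal.ofReal (ψ u))
        (volume.prod volume) :=
      (((meas_LC hm n).comp (measurable_fst.sub measurable_snd)).mul
        ((hm.ennreal_ofReal).comp measurable_snd)).aemeasurable
    rw [lintegral_lintegral_swap hunc]
    have inner : ∀ u : E, (∫⁻ x, ENNReal.ofReal (iterConv ψ n (x - u)) * ENNReal.ofReal (ψ u))
        = (∫⁻ x, ENNReal.ofReal (ψ x)) ^ (n + 1) * ENNReal.ofReal (ψ u) := by
      intro u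
      rw [lintegral_mul_const' _ _ ENNReal.ofReal_ne_top,
        lintegral_sub_right_eq_self (fun x => ENNReal.ofReal (iterConv ψ n x)) u, ih]
    simp_rw [inner]
    rw [lintegral_const_mul _ hm.ennreal_ofReal]; ring


lemma cube_third (y : ℝ≥0∞) : (y ^ (3 : ℕ)) ^ ((3 : ℝ)⁻¹) = y := by
  rw [← ENNReal.rpow_natCast y 3, ← ENNReal.rpow_mul]
  norm_num

lemma third_cube (y : ℝ≥0∞) : (y ^ ((3 : ℝ)⁻¹)) ^ (3 : ℕ) = y := by
  rw [← ENNReal.rpow_natCast (y ^ ((3:ℝ)⁻¹)) 3, ← ENNReal.rpow_mul]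
  norm_num

lemma twothird_cube (y : ℝ≥0∞) : (y ^ ((2 : ℝ) / 3)) ^ (3 : ℕ) = y ^ (2 : ℕ) := by
  rw [← ENNReal.rpow_natCast (y ^ ((2:ℝ)/3)) 3, ← ENNReal.rpow_mul, ← ENNReal.rpow_natCast y 2]
  norm_num

lemma M_ne_top {ψ : E → ℝ} (hψ : Integrable ψ) : (∫⁻ x, ENNReal.ofReal (ψ x)) ≠ ⊤ :=
  (lt_of_le_of_lt (lintegral_mono fun x => Real.ofReal_le_enorm _) hψ.2).ne

lemma cube_step {ψ : E → ℝ} (hm : Measurable ψ) (hψ : Integrable ψ) (h0 : ∀ x, 0 ≤ ψ x)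
    (n : ℕ) :
    ∫⁻ x, ENNReal.ofReal (iterConv ψ (n + 1) x) ^ (3 : ℕ)
      ≤ (∫⁻ x, ENNReal.ofReal (ψ x)) ^ (3 : ℕ) *
        ∫⁻ x, ENNReal.ofReal (iterConv ψ n x) ^ (3 : ℕ) := by
  set g : E → ℝ≥0∞ := fun x => ENNReal.ofReal (ψ x) with hg
  set F : E → ℝ≥0∞ := fun x => ENNReal.ofReal (iterConv ψ n x) with hF
  have hgm : Measurable g := hm.ennreal_ofReal
  have hFm : Measurable F := meas_LC hm n
  set M : ℝ≥0∞ := ∫⁻ x, g x with hM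
  have hMt : M ≠ ⊤ := M_ne_top hψ
  have hbound : ∀ᵐ x ∂(volume : Measure E),
      ENNReal.ofReal (iterConv ψ (n + 1) x) ^ (3 : ℕ)
        ≤ (∫⁻ u, F (x - u) ^ (3 : ℕ) * g u) * M ^ (2 : ℕ) := by
    filter_upwards [rec_ae hm hψ h0 n] with x hx
    rw [hx]
    have holder := ENNReal.lintegral_mul_norm_pow_le (μ := (volume : Measure E))
      (f := fun u => F (x - u) ^ (3 : ℕ) * g u) (g := g)
      (((hFm.comp (measurable_const.sub measurable_id)).pow_const 3).mul hgm).aemeasurable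
      hgm.aemeasurable (p := (3 : ℝ)⁻¹) (q := 2 / 3) (by norm_num) (by norm_num) (by norm_num)
    have hint_eq : ∀ u : E, (F (x - u) ^ (3 : ℕ) * g u) ^ ((3 : ℝ)⁻¹) * g u ^ ((2 : ℝ) / 3)
        = F (x - u) * g u := by
      intro u
      rw [ENNReal.mul_rpow_of_nonneg _ _ (by norm_num : (0:ℝ) ≤ (3:ℝ)⁻¹), cube_third,
        mul_assoc, ← ENNReal.rpow_add_of_nonneg _ _ (by norm_num) (by norm_num)]
      norm_num
    calc (∫⁻ u, F (x - u) * g u) ^ (3 : ℕ)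
        = (∫⁻ u, (F (x - u) ^ (3 : ℕ) * g u) ^ ((3 : ℝ)⁻¹) * g u ^ ((2 : ℝ) / 3)) ^ (3 : ℕ) := by
          simp_rw [hint_eq]
      _ ≤ ((∫⁻ u, F (x - u) ^ (3 : ℕ) * g u) ^ ((3 : ℝ)⁻¹) * M ^ ((2 : ℝ) / 3)) ^ (3 : ℕ) :=
          pow_le_pow_left' holder 3
      _ = (∫⁻ u, F (x - u) ^ (3 : ℕ) * g u) * M ^ (2 : ℕ) := by
          rw [mul_pow, third_cube, twothird_cube]
  have hswap : (∫⁻ x, ∫⁻ u, F (x - u) ^ (3 : ℕ) * g u) = (∫⁻ x, F x ^ (3 : ℕ)) * M := by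
    have hunc : AEMeasurable (Function.uncurry fun x u => F (x - u) ^ (3 : ℕ) * g u)
        (volume.prod volume) :=
      ((((hFm.comp (measurable_fst.sub measurable_snd))).pow_const 3).mul
        (hgm.comp measurable_snd)).aemeasurable
    rw [lintegral_lintegral_swap hunc]
    have inner : ∀ u : E, (∫⁻ x, F (x - u) ^ (3 : ℕ) * g u) = (∫⁻ x, F x ^ (3 : ℕ)) * g u := by
      intro u
      rw [lintegral_mul_const' _ _ ENNReal.ofReal_ne_top,
        lintegral_sub_right_eq_self (fun x => F x ^ (3 : ℕ)) u]
    simp_rw [inner]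
    rw [lintegral_const_mul _ hgm]
  calc ∫⁻ x, ENNReal.ofReal (iterConv ψ (n + 1) x) ^ (3 : ℕ)
      ≤ ∫⁻ x, (∫⁻ u, F (x - u) ^ (3 : ℕ) * g u) * M ^ (2 : ℕ) := lintegral_mono_ae hbound
    _ = (∫⁻ x, ∫⁻ u, F (x - u) ^ (3 : ℕ) * g u) * M ^ (2 : ℕ) := by
          rw [lintegral_mul_const' _ _ (ENNReal.pow_ne_top hMt)]
    _ = ((∫⁻ x, F x ^ (3 : ℕ)) * M) * M ^ (2 : ℕ) := by rw [hswap]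
    _ = M ^ (3 : ℕ) * ∫⁻ x, F x ^ (3 : ℕ) := by ring


lemma cube_bound {ψ : E → ℝ} (hm : Measurable ψ) (hψ : Integrable ψ) (h0 : ∀ x, 0 ≤ ψ x)
    (k : ℕ) :
    ∫⁻ x, ENNReal.ofReal (iterConv ψ (k + 1) x) ^ (3 : ℕ)
      ≤ (∫⁻ x, ENNReal.ofReal (ψ x)) ^ (3 * k) *
        ∫⁻ x, ENNReal.ofReal (iterConv ψ 1 x) ^ (3 : ℕ) := by
  induction k with
  | zero => simp
  | succ k ih =>
    calc ∫⁻ x, ENNReal.ofReal (iterConv ψ (k + 2) x) ^ (3 : ℕ)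
        ≤ (∫⁻ x, ENNReal.ofReal (ψ x)) ^ (3 : ℕ) *
            ∫⁻ x, ENNReal.ofReal (iterConv ψ (k + 1) x) ^ (3 : ℕ) := cube_step hm hψ h0 (k + 1)
      _ ≤ (∫⁻ x, ENNReal.ofReal (ψ x)) ^ (3 : ℕ) *
            ((∫⁻ x, ENNReal.ofReal (ψ x)) ^ (3 * k) *
              ∫⁻ x, ENNReal.ofReal (iterConv ψ 1 x) ^ (3 : ℕ)) := mul_le_mul_right ih _
      _ = (∫⁻ x, ENNReal.ofReal (ψ x)) ^ (3 * (k + 1)) *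
            ∫⁻ x, ENNReal.ofReal (iterConv ψ 1 x) ^ (3 : ℕ) := by ring

lemma T1_ne_top {ψ : E → ℝ} (hm : Measurable ψ) (hψ : Integrable ψ) (h0 : ∀ x, 0 ≤ ψ x)
    (h1 : ∀ x, ψ x ≤ 1) :
    (∫⁻ x, ENNReal.ofReal (iterConv ψ 1 x) ^ (3 : ℕ)) ≠ ⊤ := by
  set M : ℝ≥0∞ := ∫⁻ x, ENNReal.ofReal (ψ x) with hM
  have hMt : M ≠ ⊤ := M_ne_top hψ
  have hb : ∀ᵐ x ∂(volume : Measure E),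
      ENNReal.ofReal (iterConv ψ 1 x) ^ (3 : ℕ) ≤ M ^ (2 : ℕ) * ENNReal.ofReal (iterConv ψ 1 x) := by
    filter_upwards [rec_ae hm hψ h0 0] with x hx
    have hle : ENNReal.ofReal (iterConv ψ 1 x) ≤ M := by
      rw [hx]
      calc ∫⁻ u, ENNReal.ofReal (iterConv ψ 0 (x - u)) * ENNReal.ofReal (ψ u)
          ≤ ∫⁻ u, 1 * ENNReal.ofReal (ψ u) :=
            lintegral_mono fun u => mul_le_mul_left
              (ENNReal.ofReal_le_one.2 (h1 _)) _
        _ = M := by simp [hM]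
    calc ENNReal.ofReal (iterConv ψ 1 x) ^ (3 : ℕ)
        = ENNReal.ofReal (iterConv ψ 1 x) ^ (2 : ℕ) * ENNReal.ofReal (iterConv ψ 1 x) := by ring
      _ ≤ M ^ (2 : ℕ) * ENNReal.ofReal (iterConv ψ 1 x) :=
          mul_le_mul_left (pow_le_pow_left' hle 2) _
  have : (∫⁻ x, ENNReal.ofReal (iterConv ψ 1 x) ^ (3 : ℕ))
      ≤ M ^ (2 : ℕ) * ∫⁻ x, ENNReal.ofReal (iterConv ψ 1 x) := by
    calc (∫⁻ x, ENNReal.ofReal (iterConv ψ 1 x) ^ (3 : ℕ))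
        ≤ ∫⁻ x, M ^ (2 : ℕ) * ENNReal.ofReal (iterConv ψ 1 x) := lintegral_mono_ae hb
      _ = M ^ (2 : ℕ) * ∫⁻ x, ENNReal.ofReal (iterConv ψ 1 x) :=
          lintegral_const_mul _ (meas_LC hm 1)
  refine (lt_of_le_of_lt this ?_).ne
  rw [lintegral_LC hm hψ h0 1]
  exact ENNReal.mul_lt_top (ENNReal.pow_ne_top hMt).lt_top (ENNReal.pow_ne_top hMt).lt_top

lemma holder3 {f1 f2 f3 : E → ℝ≥0∞} (h1 : Measurable f1) (h2 : Measurable f2)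
    (h3 : Measurable f3) :
    ∫⁻ x, f1 x * f2 x * f3 x
      ≤ (∫⁻ x, f1 x ^ (3 : ℕ)) ^ ((3 : ℝ)⁻¹) * (∫⁻ x, f2 x ^ (3 : ℕ)) ^ ((3 : ℝ)⁻¹) *
        (∫⁻ x, f3 x ^ (3 : ℕ)) ^ ((3 : ℝ)⁻¹) := by
  have key := ENNReal.lintegral_prod_norm_pow_le (μ := (volume : Measure E))
    (Finset.univ : Finset (Fin 3))
    (f := ![fun x => f1 x ^ (3 : ℕ), fun x => f2 x ^ (3 : ℕ), fun x => f3 x ^ (3 : ℕ)])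
    (p := fun _ => (3 : ℝ)⁻¹) ?_ ?_ ?_
  · simpa [Fin.prod_univ_three, cube_third] using key
  · intro i _
    fin_cases i
    · exact (h1.pow_const 3).aemeasurable
    · exact (h2.pow_const 3).aemeasurable
    · exact (h3.pow_const 3).aemeasurable
  · simp [Fin.sum_univ_three]
  · intro i _; norm_num


lemma pow3k_third (M : ℝ≥0∞) (k : ℕ) : (M ^ (3 * k)) ^ ((3 : ℝ)⁻¹) = M ^ k := by
  rw [← ENNReal.rpow_natCast M (3 * k), ← ENNReal.rpow_mul, ← ENNReal.rpow_natCast M k]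
  congr 1
  push_cast
  ring

lemma conv_congr_left {f f' g : E → ℝ} (h : f =ᵐ[volume] f') : conv f g = conv f' g := by
  funext x
  refine integral_congr_ae ?_
  have h2 := (MeasureTheory.Measure.measurePreserving_sub_left (volume : Measure E)
    x).quasiMeasurePreserving.ae_eq_comp h
  filter_upwards [h2] with u hu
  simp only [Function.comp_apply] at hu
  rw [hu]

lemma conv_congr_right {f g g' : E → ℝ} (h : g =ᵐ[volume] g') : conv f g = conv f g' := by
  funext x
  refine integral_congr_ae ?_
  filter_upwards [h] with u hu
  rw [hu]

lemma iterConv_congr {φ ψ : E → ℝ} (h : φ =ᵐ[volume] ψ) :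
    ∀ n, iterConv φ (n + 1) = iterConv ψ (n + 1) := by
  intro n
  induction n with
  | zero => show conv φ φ = conv ψ ψ; rw [conv_congr_left h, conv_congr_right h]
  | succ n ih =>
    show conv (iterConv φ (n + 1)) φ = conv (iterConv ψ (n + 1)) ψ
    rw [ih, conv_congr_right h]

end ConvAux

open ConvAux

theorem stmt_0 {d : ℕ} (φ : EuclideanSpace ℝ (Fin d) → ℝ)
    (hint : Integrable φ) (hnonneg : ∀ x, 0 ≤ φ x) (hle : ∀ x, φ x ≤ 1)
    (hsymm : ∀ x, φ (-x) = φ x)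
    (n₁ n₂ n₃ : ℕ) (h₁ : 2 ≤ n₁) (h₂ : 2 ≤ n₂) (h₃ : 2 ≤ n₃) :
    (∫ x, iterConv φ (n₁ - 1) x * iterConv φ (n₂ - 1) x * iterConv φ (n₃ - 1) x) ≤
      (∫ x, φ x) ^ (n₁ + n₂ + n₃ - 6) * ∫ x, (iterConv φ 1 x) ^ 3 := by
  obtain ⟨k₁, rfl⟩ : ∃ k, n₁ = k + 2 := ⟨n₁ - 2, by omega⟩
  obtain ⟨k₂, rfl⟩ : ∃ k, n₂ = k + 2 := ⟨n₂ - 2, by omega⟩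
  obtain ⟨k₃, rfl⟩ : ∃ k, n₃ = k + 2 := ⟨n₃ - 2, by omega⟩
  have hsub : ∀ k : ℕ, k + 2 - 1 = k + 1 := fun k => rfl
  have hexp : k₁ + 2 + (k₂ + 2) + (k₃ + 2) - 6 = k₁ + k₂ + k₃ := by omega
  rw [hsub, hsub, hsub, hexp]
  -- measurable representative
  set ψ : EuclideanSpace ℝ (Fin d) → ℝ := fun x => max 0 (min (hint.1.mk φ x) 1) with hψdef
  have hm : Measurable ψ :=
    measurable_const.max (hint.1.stronglyMeasurable_mk.measurable.min measurable_const)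
  have hae : φ =ᵐ[volume] ψ := by
    filter_upwards [hint.1.ae_eq_mk] with x hx
    rw [hψdef]
    simp only
    rw [← hx, min_eq_left (hle x), max_eq_right (hnonneg x)]
  have h0 : ∀ x, 0 ≤ ψ x := fun x => le_max_left _ _
  have h1 : ∀ x, ψ x ≤ 1 := fun x => max_le (by norm_num) (min_le_right _ _)
  have hψint : Integrable ψ := hint.congr hae
  have hiter := iterConv_congr hae
  rw [hiter k₁, hiter k₂, hiter k₃, hiter 0, integral_congr_ae hae]
  -- notation
  set M : ℝ≥0∞ := ∫⁻ x, ENNReal.ofReal (ψ x) with hM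
  set T : ℝ≥0∞ := ∫⁻ x, ENNReal.ofReal (iterConv ψ 1 x) ^ (3 : ℕ) with hT
  have hMt : M ≠ ⊤ := M_ne_top hψint
  have hTt : T ≠ ⊤ := T1_ne_top hm hψint h0 h1
  set K : ℕ := k₁ + k₂ + k₃ with hK
  -- lintegral bound
  have key : (∫⁻ x, ENNReal.ofReal (iterConv ψ (k₁ + 1) x) *
      ENNReal.ofReal (iterConv ψ (k₂ + 1) x) * ENNReal.ofReal (iterConv ψ (k₃ + 1) x))
      ≤ M ^ K * T := by
    have step1 := holder3 (meas_LC hm (k₁ + 1)) (meas_LC hm (k₂ + 1)) (meas_LC hm (k₃ + 1))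
    have step2 : ∀ k : ℕ, (∫⁻ x, ENNReal.ofReal (iterConv ψ (k + 1) x) ^ (3 : ℕ)) ^ ((3:ℝ)⁻¹)
        ≤ M ^ k * T ^ ((3:ℝ)⁻¹) := by
      intro k
      calc (∫⁻ x, ENNReal.ofReal (iterConv ψ (k + 1) x) ^ (3 : ℕ)) ^ ((3:ℝ)⁻¹)
          ≤ (M ^ (3 * k) * T) ^ ((3:ℝ)⁻¹) :=
            ENNReal.rpow_le_rpow (cube_bound hm hψint h0 k) (by norm_num)
        _ = M ^ k * T ^ ((3:ℝ)⁻¹) := by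
            rw [ENNReal.mul_rpow_of_nonneg _ _ (by norm_num : (0:ℝ) ≤ (3:ℝ)⁻¹), pow3k_third]
    calc (∫⁻ x, ENNReal.ofReal (iterConv ψ (k₁ + 1) x) *
          ENNReal.ofReal (iterConv ψ (k₂ + 1) x) * ENNReal.ofReal (iterConv ψ (k₃ + 1) x))
        ≤ (∫⁻ x, ENNReal.ofReal (iterConv ψ (k₁ + 1) x) ^ (3 : ℕ)) ^ ((3:ℝ)⁻¹) *
            (∫⁻ x, ENNReal.ofReal (iterConv ψ (k₂ + 1) x) ^ (3 : ℕ)) ^ ((3:ℝ)⁻¹) *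
            (∫⁻ x, ENNReal.ofReal (iterConv ψ (k₃ + 1) x) ^ (3 : ℕ)) ^ ((3:ℝ)⁻¹) := step1
      _ ≤ (M ^ k₁ * T ^ ((3:ℝ)⁻¹)) * (M ^ k₂ * T ^ ((3:ℝ)⁻¹)) * (M ^ k₃ * T ^ ((3:ℝ)⁻¹)) :=
          mul_le_mul' (mul_le_mul' (step2 k₁) (step2 k₂)) (step2 k₃)
      _ = M ^ K * (T ^ ((3:ℝ)⁻¹)) ^ (3 : ℕ) := by rw [hK]; ring
      _ = M ^ K * T := by rw [third_cube]
  -- convert to real integrals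
  have hLHS : (∫ x, iterConv ψ (k₁ + 1) x * iterConv ψ (k₂ + 1) x * iterConv ψ (k₃ + 1) x)
      = (∫⁻ x, ENNReal.ofReal (iterConv ψ (k₁ + 1) x) *
          ENNReal.ofReal (iterConv ψ (k₂ + 1) x) * ENNReal.ofReal (iterConv ψ (k₃ + 1) x)).toReal := by
    rw [integral_eq_lintegral_of_nonneg_ae
      (ae_of_all _ fun x => mul_nonneg
        (mul_nonneg (iterConv_nonneg h0 _ x) (iterConv_nonneg h0 _ x)) (iterConv_nonneg h0 _ x))
      (((meas_iterConv hm _).mul (meas_iterConv hm _)).mul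
        (meas_iterConv hm _)).aestronglyMeasurable]
    congr 1
    refine lintegral_congr fun x => ?_
    rw [ENNReal.ofReal_mul (mul_nonneg (iterConv_nonneg h0 _ x) (iterConv_nonneg h0 _ x)),
      ENNReal.ofReal_mul (iterConv_nonneg h0 _ x)]
  have hMr : M.toReal = ∫ x, ψ x := by
    rw [hM, ← ofReal_integral_eq_lintegral_ofReal hψint (ae_of_all _ h0),
      ENNReal.toReal_ofReal (integral_nonneg h0)]
  have hTr : T.toReal = ∫ x, (iterConv ψ 1 x) ^ 3 := by
    rw [integral_eq_lintegral_of_nonneg_ae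
      (ae_of_all _ fun x => pow_nonneg (iterConv_nonneg h0 1 x) 3)
      ((meas_iterConv hm 1).pow_const 3).aestronglyMeasurable]
    congr 1
    exact lintegral_congr fun x => (ENNReal.ofReal_pow (iterConv_nonneg h0 1 x) 3).symm
  rw [hLHS, ← hMr, ← hTr]
  calc (∫⁻ x, ENNReal.ofReal (iterConv ψ (k₁ + 1) x) *
      ENNReal.ofReal (iterConv ψ (k₂ + 1) x) * ENNReal.ofReal (iterConv ψ (k₃ + 1) x)).toReal
      ≤ (M ^ K * T).toReal :=
        ENNReal.toReal_mono (ENNReal.mul_ne_top (ENNReal.pow_ne_top hMt) hTt) key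
    _ = M.toReal ^ K * T.toReal := by rw [ENNReal.toReal_mul, ENNReal.toReal_pow]
end

section
/- For an integrable nonnegative symmetric function φ : ℝ^d → [0,1] and integers n1, n2 ≥ 2 with n1 + n2 ≥ 6, one has ∫ φ^{⋆n1}(x) φ^{⋆n2}(x) φ(x) dx ≤ φ^{⋆(n1+n2)}(0) ≤ (∫ φ(x) dx)^{n1+n2-6} · φ^{⋆6}(0). -/
/-!
Write `φ^{⋆n}` for the `n`-fold self-convolution. Since `0 ≤ φ ≤ 1`, every `φ^{⋆n}` is integrable,
nonnegative, even and bounded by `(∫ φ)^{n-1}`, so convolution is associative on these functions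
and evenness gives `φ^{⋆(a+b)}(0) = ∫ φ^{⋆a} φ^{⋆b}`. The first inequality is then `φ ≤ 1` under
the integral. For the second, `φ^{⋆6} = φ^{⋆3} ⋆ φ^{⋆3}` with `φ^{⋆3}` even and square integrable,
so `φ^{⋆6}(x) ≤ ‖φ^{⋆3}‖₂² = φ^{⋆6}(0)`; hence
`φ^{⋆n}(0) = ∫ φ^{⋆6} φ^{⋆(n-6)} ≤ φ^{⋆6}(0) · (∫ φ)^{n-6}`.
-/

open MeasureTheory

open ContinuousLinearMap
open scoped Convolution

section Convolution

variable {G : Type*} [AddCommGroup G] [MeasurableSpace G] [MeasurableAdd₂ G] [MeasurableNeg G]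
  {μ : Measure G} [μ.IsAddLeftInvariant]

theorem convolutionExistsAt_of_norm_le [SFinite μ] {f g : G → ℝ} (hf : Integrable f μ)
    (hg : AEStronglyMeasurable g μ) {C : ℝ} (hC : ∀ x, ‖g x‖ ≤ C) (x : G) :
    ConvolutionExistsAt f g x (mul ℝ ℝ) μ :=
  hf.mul_bdd (hg.comp_quasiMeasurePreserving
    (quasiMeasurePreserving_sub_left_of_right_invariant μ x)) (.of_forall fun t => hC (x - t))

theorem convolution_assoc_of_nonneg [SFinite μ] {f g k : G → ℝ} (hf : Integrable f μ)
    (hg : Integrable g μ) (hk : Integrable k μ) (hg0 : 0 ≤ g) (hk0 : 0 ≤ k) {C : ℝ}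
    (hC : ∀ x, ‖(g ⋆[mul ℝ ℝ, μ] k) x‖ ≤ C) :
    (f ⋆[mul ℝ ℝ, μ] g) ⋆[mul ℝ ℝ, μ] k = f ⋆[mul ℝ ℝ, μ] (g ⋆[mul ℝ ℝ, μ] k) := by
  have norm_eq {h : G → ℝ} (h0 : 0 ≤ h) : (fun x => ‖h x‖) = h :=
    funext fun x => Real.norm_of_nonneg (h0 x)
  funext x
  refine convolution_assoc _ _ _ _ (fun a b c => mul_assoc a b c) hf.aestronglyMeasurable
    hg.aestronglyMeasurable hk.aestronglyMeasurable (hf.ae_convolution_exists _ hg) ?_ ?_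
  · rw [norm_eq hg0, norm_eq hk0]
    exact hg.ae_convolution_exists _ hk
  · rw [norm_eq hg0, norm_eq hk0]
    exact convolutionExistsAt_of_norm_le hf.norm
      (hg.integrable_convolution _ hk).aestronglyMeasurable hC x

theorem convolution_self_le_convolution_self_zero [μ.IsNegInvariant] {f : G → ℝ}
    (hf : Integrable (fun x => f x ^ 2) μ) (heven : ∀ x, f (-x) = f x) (x : G) :
    (f ⋆[mul ℝ ℝ, μ] f) x ≤ (f ⋆[mul ℝ ℝ, μ] f) 0 := by
  have hzero : (f ⋆[mul ℝ ℝ, μ] f) 0 = ∫ t, f t ^ 2 ∂μ := by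
    simp only [convolution_mul_swap, zero_sub, heven, sq]
  rw [hzero, convolution_mul_swap]
  by_cases hprod : Integrable (fun t => f (x - t) * f t) μ
  · -- `ab ≤ (a² + b²)/2`, and `t ↦ f (x - t)` has the same `L²` norm as `f`.
    calc ∫ t, f (x - t) * f t ∂μ ≤ ∫ t, (f (x - t) ^ 2 + f t ^ 2) / 2 ∂μ :=
          integral_mono hprod (((hf.comp_sub_left x).add hf).div_const 2) fun t => by
            nlinarith [sq_nonneg (f (x - t) - f t)]
      _ = ∫ t, f t ^ 2 ∂μ := by
          rw [integral_div, integral_add (hf.comp_sub_left x) hf,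
            integral_sub_left_eq_self (fun t => f t ^ 2) μ x]
          ring
  · rw [integral_undef hprod]
    exact integral_nonneg fun t => sq_nonneg (f t)

end Convolution

namespace iterConv

variable {d : ℕ} {φ : EuclideanSpace ℝ (Fin d) → ℝ}

theorem succ_eq_convolution (φ : EuclideanSpace ℝ (Fin d) → ℝ) (n : ℕ) :
    iterConv φ (n + 1) = iterConv φ n ⋆[mul ℝ ℝ, volume] φ :=
  funext fun _ => convolution_mul_swap.symm

theorem integrable (hφ : Integrable φ) (n : ℕ) : Integrable (iterConv φ n) := by
  induction n with
  | zero => exact hφ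
  | succ n ih => rw [succ_eq_convolution]; exact ih.integrable_convolution _ hφ

theorem nonneg (hφ : 0 ≤ φ) (n : ℕ) : 0 ≤ iterConv φ n := by
  induction n with
  | zero => exact hφ
  | succ n ih => exact fun x => integral_nonneg fun u => mul_nonneg (ih _) (hφ u)

theorem even (hφ_even : ∀ x, φ (-x) = φ x) (n : ℕ) (x : EuclideanSpace ℝ (Fin d)) :
    iterConv φ n (-x) = iterConv φ n x := by
  induction n generalizing x with
  | zero => exact hφ_even x
  | succ n ih =>
    rw [succ_eq_convolution]
    exact convolution_neg_of_neg_eq _ (.of_forall ih) (.of_forall hφ_even)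

theorem integral_eq_pow (hφ : Integrable φ) (n : ℕ) :
    ∫ x, iterConv φ n x = (∫ x, φ x) ^ (n + 1) := by
  induction n with
  | zero => simp [iterConv]
  | succ n ih =>
    rw [succ_eq_convolution, integral_convolution _ (integrable hφ n) hφ, mul_apply', ih,
      ← pow_succ]

theorem le_pow (hφ : Integrable φ) (hφ0 : 0 ≤ φ) (hφ1 : φ ≤ 1) (n : ℕ)
    (x : EuclideanSpace ℝ (Fin d)) : iterConv φ n x ≤ (∫ x, φ x) ^ n := by
  induction n generalizing x with
  | zero => simpa [iterConv] using hφ1 x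
  | succ n ih =>
    calc iterConv φ (n + 1) x ≤ ∫ u, (∫ x, φ x) ^ n * φ u :=
          integral_mono_of_nonneg (.of_forall fun u => mul_nonneg (nonneg hφ0 n _) (hφ0 u))
            (hφ.const_mul _) (.of_forall fun u => mul_le_mul_of_nonneg_right (ih _) (hφ0 u))
      _ = (∫ x, φ x) ^ (n + 1) := by rw [integral_const_mul, pow_succ]

theorem norm_le_pow (hφ : Integrable φ) (hφ0 : 0 ≤ φ) (hφ1 : φ ≤ 1) (n : ℕ)
    (x : EuclideanSpace ℝ (Fin d)) : ‖iterConv φ n x‖ ≤ (∫ x, φ x) ^ n := by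
  rw [Real.norm_of_nonneg (nonneg hφ0 n x)]
  exact le_pow hφ hφ0 hφ1 n x

theorem add_eq_convolution (hφ : Integrable φ) (hφ0 : 0 ≤ φ) (hφ1 : φ ≤ 1) (a b : ℕ) :
    iterConv φ (a + b + 1) = iterConv φ a ⋆[mul ℝ ℝ, volume] iterConv φ b := by
  induction b with
  | zero => exact succ_eq_convolution φ a
  | succ b ih =>
    rw [← add_assoc, succ_eq_convolution, ih, succ_eq_convolution,
      convolution_assoc_of_nonneg (integrable hφ a) (integrable hφ b) hφ (nonneg hφ0 b) hφ0]
    simpa only [← succ_eq_convolution] using norm_le_pow hφ hφ0 hφ1 (b + 1)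

theorem apply_zero_eq_integral_mul (hφ : Integrable φ) (hφ0 : 0 ≤ φ) (hφ1 : φ ≤ 1)
    (hφ_even : ∀ x, φ (-x) = φ x) (a b : ℕ) :
    iterConv φ (a + b + 1) 0 = ∫ x, iterConv φ a x * iterConv φ b x := by
  simp only [add_eq_convolution hφ hφ0 hφ1, convolution_mul_swap, zero_sub, even hφ_even]

theorem five_apply_le_apply_zero (hφ : Integrable φ) (hφ0 : 0 ≤ φ) (hφ1 : φ ≤ 1)
    (hφ_even : ∀ x, φ (-x) = φ x) (x : EuclideanSpace ℝ (Fin d)) :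
    iterConv φ 5 x ≤ iterConv φ 5 0 := by
  have hsq : Integrable (fun x => iterConv φ 2 x ^ 2) := by
    simpa only [sq] using (integrable hφ 2).mul_bdd (integrable hφ 2).aestronglyMeasurable
      (.of_forall (norm_le_pow hφ hφ0 hφ1 2))
  rw [add_eq_convolution hφ hφ0 hφ1 2 2]
  exact convolution_self_le_convolution_self_zero hsq (even hφ_even 2) x

theorem integral_mul_mul_le (hφ : Integrable φ) (hφ0 : 0 ≤ φ) (hφ1 : φ ≤ 1)
    (hφ_even : ∀ x, φ (-x) = φ x) (a b : ℕ) :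
    ∫ x, iterConv φ a x * iterConv φ b x * φ x ≤ iterConv φ (a + b + 1) 0 := by
  rw [apply_zero_eq_integral_mul hφ hφ0 hφ1 hφ_even]
  refine integral_mono_of_nonneg
    (.of_forall fun x => mul_nonneg (mul_nonneg (nonneg hφ0 a x) (nonneg hφ0 b x)) (hφ0 x))
    ((integrable hφ a).mul_bdd (integrable hφ b).aestronglyMeasurable
      (.of_forall (norm_le_pow hφ hφ0 hφ1 b)))
    (.of_forall fun x => ?_)
  exact mul_le_of_le_one_right (mul_nonneg (nonneg hφ0 a x) (nonneg hφ0 b x)) (hφ1 x)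

theorem apply_zero_le_pow_mul (hφ : Integrable φ) (hφ0 : 0 ≤ φ) (hφ1 : φ ≤ 1)
    (hφ_even : ∀ x, φ (-x) = φ x) (m : ℕ) :
    iterConv φ (m + 5) 0 ≤ (∫ x, φ x) ^ m * iterConv φ 5 0 := by
  cases m with
  | zero => simp
  | succ m =>
    calc iterConv φ (m + 1 + 5) 0 = ∫ x, iterConv φ 5 x * iterConv φ m x := by
          rw [← apply_zero_eq_integral_mul hφ hφ0 hφ1 hφ_even]; ring_nf
      _ ≤ ∫ x, iterConv φ 5 0 * iterConv φ m x :=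
          integral_mono_of_nonneg
            (.of_forall fun x => mul_nonneg (nonneg hφ0 5 x) (nonneg hφ0 m x))
            ((integrable hφ m).const_mul _)
            (.of_forall fun x => mul_le_mul_of_nonneg_right
              (five_apply_le_apply_zero hφ hφ0 hφ1 hφ_even x) (nonneg hφ0 m x))
      _ = (∫ x, φ x) ^ (m + 1) * iterConv φ 5 0 := by
          rw [integral_const_mul, integral_eq_pow hφ, mul_comm]

end iterConv

theorem stmt_1 {d : ℕ} (φ : EuclideanSpace ℝ (Fin d) → ℝ)
    (hint : Integrable φ) (hnonneg : ∀ x, 0 ≤ φ x) (hle : ∀ x, φ x ≤ 1)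
    (hsymm : ∀ x, φ (-x) = φ x)
    (n₁ n₂ : ℕ) (h₁ : 2 ≤ n₁) (h₂ : 2 ≤ n₂) (hsum : 6 ≤ n₁ + n₂) :
    (∫ x, iterConv φ (n₁ - 1) x * iterConv φ (n₂ - 1) x * φ x) ≤
        iterConv φ (n₁ + n₂ - 1) 0 ∧
      iterConv φ (n₁ + n₂ - 1) 0 ≤ (∫ x, φ x) ^ (n₁ + n₂ - 6) * iterConv φ 5 0 := by
  constructor
  · have hsplit : n₁ + n₂ - 1 = n₁ - 1 + (n₂ - 1) + 1 := by omega
    rw [hsplit]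
    exact iterConv.integral_mul_mul_le hint hnonneg hle hsymm _ _
  · obtain ⟨m, hm⟩ : ∃ m, n₁ + n₂ = m + 6 := ⟨_, (Nat.sub_add_cancel hsum).symm⟩
    rw [hm, Nat.add_sub_cancel]
    exact iterConv.apply_zero_le_pow_mul hint hnonneg hle hsymm m
end

section
/- For n₁, n₂, n₃ ≥ 1 and γ > 0, the identity (1/(2π)²) ∫∫_{ℝ²} exp(-n₁γ|k| - n₂γ|k-l| - n₃γ|l|) dk dl = (n₁+n₂+n₃)/((n₁+n₂)(n₁+n₃)(n₂+n₃)γ²π²) holds. -/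
open MeasureTheory Real Set

private lemma aux_int_Ioi {m : ℝ} (hm : 0 < m) (p : ℝ) :
    IntegrableOn (fun x : ℝ => Real.exp (-(m * x))) (Ioi p) := by
  simpa [neg_mul] using exp_neg_integrableOn_Ioi p hm

private lemma aux_val_Ioi {m : ℝ} (hm : 0 < m) (p : ℝ) :
    ∫ x in Ioi p, Real.exp (-(m * x)) = Real.exp (-(m * p)) / m := by
  have h := integral_comp_mul_left_Ioi (fun x => Real.exp (-x)) p hm
  simp only [smul_eq_mul] at h
  rw [h, integral_exp_neg_Ioi, eq_div_iff hm.ne']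
  rw [mul_comm, ← mul_assoc, mul_inv_cancel₀ hm.ne', one_mul]

private lemma aux_int_Iic {m : ℝ} (hm : 0 < m) (p : ℝ) :
    IntegrableOn (fun x : ℝ => Real.exp (m * x)) (Iic p) := by
  rw [← (Measure.measurePreserving_neg (volume : Measure ℝ)).integrableOn_comp_preimage
      (Homeomorph.neg ℝ).measurableEmbedding]
  simp only [Function.comp_def, neg_preimage, neg_Iic, mul_neg, ← neg_mul]
  rw [integrableOn_Ici_iff_integrableOn_Ioi]
  simpa [neg_mul] using aux_int_Ioi hm (-p)

private lemma aux_val_Iic {m : ℝ} (hm : 0 < m) :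
    ∫ x in Iic (0:ℝ), Real.exp (m * x) = 1 / m := by
  have h := integral_comp_neg_Ioi 0 (fun x => Real.exp (m * x))
  rw [neg_zero] at h
  rw [← h]
  simp_rw [mul_neg, ← neg_mul, neg_mul m]
  rw [aux_val_Ioi hm 0]
  simp

private lemma aux_int_xexp {m : ℝ} (hm : 0 < m) :
    IntegrableOn (fun x : ℝ => x * Real.exp (-(m * x))) (Ioi (0:ℝ)) := by
  have h := integrableOn_rpow_mul_exp_neg_mul_rpow (s := 1) (p := 1)
    (by norm_num) zero_lt_one hm
  refine h.congr_fun (fun x hx => ?_) measurableSet_Ioi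
  beta_reduce
  rw [neg_mul, Real.rpow_one]

private lemma aux_val_xexp {m : ℝ} (hm : 0 < m) :
    ∫ x in Ioi (0:ℝ), x * Real.exp (-(m * x)) = 1 / m ^ 2 := by
  have h := integral_rpow_mul_exp_neg_mul_Ioi (a := 2) (by norm_num) hm
  rw [Real.Gamma_two, mul_one] at h
  have h2 : ∫ t in Ioi (0:ℝ), t ^ ((2:ℝ) - 1) * Real.exp (-(m * t))
      = ∫ t in Ioi (0:ℝ), t * Real.exp (-(m * t)) := by
    refine setIntegral_congr_fun measurableSet_Ioi (fun x _ => ?_)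
    rw [show (2:ℝ)-1 = 1 by norm_num, Real.rpow_one]
  rw [h2] at h
  rw [h]
  rw [show ((1:ℝ)/m) ^ (2:ℝ) = (1/m) ^ (2:ℕ) by
    rw [← Real.rpow_natCast (1/m) 2]; norm_num]
  rw [div_pow, one_pow]

private lemma aux_exp_Ioc {m : ℝ} (hm : m ≠ 0) {k : ℝ} (hk : 0 ≤ k) :
    ∫ l in Ioc (0:ℝ) k, Real.exp (m * l) = (Real.exp (m * k) - 1) / m := by
  rw [← intervalIntegral.integral_of_le hk]
  have hd : ∀ x ∈ uIcc (0:ℝ) k, HasDerivAt (fun x => Real.exp (m * x) / m)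
      (Real.exp (m * x)) x := by
    intro x _
    have : HasDerivAt (fun x : ℝ => Real.exp (m * x)) (Real.exp (m * x) * m) x := by
      simpa using ((hasDerivAt_id x).const_mul m).exp
    simpa [mul_div_assoc, mul_div_cancel_right₀ _ hm] using this.div_const m
  rw [intervalIntegral.integral_eq_sub_of_hasDerivAt hd
    (Continuous.intervalIntegrable (by continuity) 0 k)]
  simp [sub_div]

private lemma aux_one_Ioc {k : ℝ} (hk : 0 ≤ k) :
    ∫ _ in Ioc (0:ℝ) k, (1:ℝ) = k := by
  simp [Real.volume_Ioc, hk]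

section key

variable {a b c : ℝ}

private lemma inner_eval (_ha : 0 < a) (hb : 0 < b) (hc : 0 < c) {k : ℝ} (hk : 0 ≤ k) :
    ∫ l : ℝ, Real.exp (-(a * |k|) - b * |k - l| - c * |l|)
      = Real.exp (-((a+b)*k))/(b+c) + Real.exp (-((a+c)*k))/(b+c)
        + Real.exp (-((a+b)*k)) * ∫ l in Ioc (0:ℝ) k, Real.exp ((b-c)*l) := by
  set f : ℝ → ℝ := fun l => Real.exp (-(a * |k|) - b * |k - l| - c * |l|) with hf
  have e1 : EqOn f (fun l => Real.exp (-((a+b)*k)) * Real.exp ((b+c)*l)) (Iic 0) := by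
    intro l hl
    simp only [mem_Iic] at hl
    simp only [f, abs_of_nonneg hk, abs_of_nonneg (by linarith : (0:ℝ) ≤ k - l),
      abs_of_nonpos hl, ← Real.exp_add]
    congr 1; ring
  have e2 : EqOn f (fun l => Real.exp (-((a+b)*k)) * Real.exp ((b-c)*l)) (Ioc 0 k) := by
    intro l hl
    simp only [mem_Ioc] at hl
    simp only [f, abs_of_nonneg hk, abs_of_nonneg (by linarith : (0:ℝ) ≤ k - l),
      abs_of_nonneg hl.1.le, ← Real.exp_add]
    congr 1; ring
  have e3 : EqOn f (fun l => Real.exp ((b-a)*k) * Real.exp (-((b+c)*l))) (Ioi k) := by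
    intro l hl
    simp only [mem_Ioi] at hl
    simp only [f, abs_of_nonneg hk, abs_of_nonpos (by linarith : k - l ≤ (0:ℝ)),
      abs_of_nonneg (hk.trans hl.le), ← Real.exp_add]
    congr 1; ring
  have i1 : IntegrableOn f (Iic 0) :=
    IntegrableOn.congr_fun ((aux_int_Iic (show (0:ℝ) < b + c by linarith) 0).const_mul _)
      (fun l hl => (e1 hl).symm) measurableSet_Iic
  have i2 : IntegrableOn f (Ioc 0 k) := by
    apply Continuous.integrableOn_Ioc
    fun_prop
  have i3 : IntegrableOn f (Ioi k) :=
    IntegrableOn.congr_fun ((aux_int_Ioi (show (0:ℝ) < b + c by linarith) k).const_mul _)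
      (fun l hl => (e3 hl).symm) measurableSet_Ioi
  have hioi : IntegrableOn f (Ioi 0) := by
    rw [← Ioc_union_Ioi_eq_Ioi hk]
    exact i2.union i3
  have split : ∫ l, f l = (∫ l in Iic 0, f l) + ∫ l in Ioi 0, f l :=
    (intervalIntegral.integral_Iic_add_Ioi i1 hioi).symm
  have split2 : ∫ l in Ioi 0, f l = (∫ l in Ioc 0 k, f l) + ∫ l in Ioi k, f l := by
    rw [← Ioc_union_Ioi_eq_Ioi hk,
      setIntegral_union (Ioc_disjoint_Ioi le_rfl) measurableSet_Ioi i2 i3]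
  have v1 : ∫ l in Iic 0, f l = Real.exp (-((a+b)*k))/(b+c) := by
    rw [setIntegral_congr_fun measurableSet_Iic e1, integral_const_mul, aux_val_Iic (by linarith)]
    ring
  have v2 : ∫ l in Ioc 0 k, f l
      = Real.exp (-((a+b)*k)) * ∫ l in Ioc (0:ℝ) k, Real.exp ((b-c)*l) := by
    rw [setIntegral_congr_fun measurableSet_Ioc e2, integral_const_mul]
  have v3 : ∫ l in Ioi k, f l = Real.exp (-((a+c)*k))/(b+c) := by
    rw [setIntegral_congr_fun measurableSet_Ioi e3, integral_const_mul,
      aux_val_Ioi (by linarith) k, ← mul_div_assoc, ← Real.exp_add]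
    congr 2
    ring
  rw [split, split2, v1, v2, v3]
  ring

private lemma key (ha : 0 < a) (hb : 0 < b) (hc : 0 < c) :
    ∫ k : ℝ, ∫ l : ℝ, Real.exp (-(a * |k|) - b * |k - l| - c * |l|)
      = 4 * (a + b + c) / ((a + b) * (a + c) * (b + c)) := by
  have heven : ∀ k : ℝ, (∫ l : ℝ, Real.exp (-(a * |-k|) - b * |-k - l| - c * |l|))
      = ∫ l : ℝ, Real.exp (-(a * |k|) - b * |k - l| - c * |l|) := by
    intro k
    rw [← integral_neg_eq_self (fun l : ℝ => Real.exp (-(a * |-k|) - b * |-k - l| - c * |l|))]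
    congr 1
    funext l
    show Real.exp (-(a * |-k|) - b * |-k - -l| - c * |-l|) = _
    rw [abs_neg k, abs_neg l, show -k - -l = -(k - l) by ring, abs_neg]
  have hform : ∀ k : ℝ, (∫ l : ℝ, Real.exp (-(a * |k|) - b * |k - l| - c * |l|))
      = Real.exp (-((a+b)*|k|))/(b+c) + Real.exp (-((a+c)*|k|))/(b+c)
        + Real.exp (-((a+b)*|k|)) * ∫ l in Ioc (0:ℝ) |k|, Real.exp ((b-c)*l) := by
    intro k
    rcases le_or_gt 0 k with hk | hk
    · conv_rhs => rw [abs_of_nonneg hk]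
      exact inner_eval ha hb hc hk
    · have h0 : (0:ℝ) ≤ -k := by linarith
      have h2 := inner_eval ha hb hc (k := -k) h0
      rw [heven k] at h2
      conv_rhs => rw [abs_of_neg hk]
      exact h2
  have habs : (∫ k : ℝ, ∫ l : ℝ, Real.exp (-(a * |k|) - b * |k - l| - c * |l|))
      = 2 * ∫ k in Ioi (0:ℝ),
          (Real.exp (-((a+b)*k))/(b+c) + Real.exp (-((a+c)*k))/(b+c)
            + Real.exp (-((a+b)*k)) * ∫ l in Ioc (0:ℝ) k, Real.exp ((b-c)*l)) := by
    rw [← integral_comp_abs (f := fun k => Real.exp (-((a+b)*k))/(b+c)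
      + Real.exp (-((a+c)*k))/(b+c)
      + Real.exp (-((a+b)*k)) * ∫ l in Ioc (0:ℝ) k, Real.exp ((b-c)*l))]
    exact integral_congr_ae (Filter.Eventually.of_forall hform)
  rw [habs]
  rcases eq_or_ne b c with hbc | hbc
  · -- b = c
    subst hbc
    have hcongr : ∫ k in Ioi (0:ℝ),
        (Real.exp (-((a+b)*k))/(b+b) + Real.exp (-((a+b)*k))/(b+b)
          + Real.exp (-((a+b)*k)) * ∫ l in Ioc (0:ℝ) k, Real.exp ((b-b)*l))
        = ∫ k in Ioi (0:ℝ),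
          ((1/b) * Real.exp (-((a+b)*k)) + k * Real.exp (-((a+b)*k))) := by
      refine setIntegral_congr_fun measurableSet_Ioi (fun k hk => ?_)
      have : ∫ l in Ioc (0:ℝ) k, Real.exp ((b-b)*l) = k := by
        rw [show b - b = 0 by ring]
        simpa using aux_one_Ioc (le_of_lt hk)
      rw [this]
      field_simp
    rw [hcongr, integral_add ((aux_int_Ioi (by linarith) 0).const_mul _)
      (aux_int_xexp (by linarith)),
      integral_const_mul, aux_val_Ioi (by linarith) 0, aux_val_xexp (by linarith)]
    rw [mul_zero, neg_zero, Real.exp_zero]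
    field_simp
    ring
  · -- b ≠ c
    have hsub : b - c ≠ 0 := sub_ne_zero.mpr hbc
    have hcongr : ∫ k in Ioi (0:ℝ),
        (Real.exp (-((a+b)*k))/(b+c) + Real.exp (-((a+c)*k))/(b+c)
          + Real.exp (-((a+b)*k)) * ∫ l in Ioc (0:ℝ) k, Real.exp ((b-c)*l))
        = ∫ k in Ioi (0:ℝ),
          ((1/(b+c) - 1/(b-c)) * Real.exp (-((a+b)*k))
            + (1/(b+c) + 1/(b-c)) * Real.exp (-((a+c)*k))) := by
      refine setIntegral_congr_fun measurableSet_Ioi (fun k hk => ?_)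
      rw [aux_exp_Ioc hsub (le_of_lt hk)]
      have hcomb : Real.exp (-((a+b)*k)) * Real.exp ((b-c)*k) = Real.exp (-((a+c)*k)) := by
        rw [← Real.exp_add]; congr 1; ring
      linear_combination hcomb / (b - c)
    rw [hcongr, integral_add ((aux_int_Ioi (by linarith) 0).const_mul _)
      ((aux_int_Ioi (by linarith) 0).const_mul _),
      integral_const_mul, integral_const_mul, aux_val_Ioi (by linarith) 0,
      aux_val_Ioi (by linarith) 0]
    simp only [mul_zero, neg_zero, Real.exp_zero]
    have h1 : a + b ≠ 0 := by linarith
    have h2 : a + c ≠ 0 := by linarith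
    have h3 : b + c ≠ 0 := by linarith
    field_simp
    ring

end key

theorem stmt_15 (γ : ℝ) (hγ : 0 < γ) (n₁ n₂ n₃ : ℕ)
    (h₁ : 1 ≤ n₁) (h₂ : 1 ≤ n₂) (h₃ : 1 ≤ n₃) :
    (1 / (2 * π) ^ 2) *
        ∫ k : ℝ, ∫ l : ℝ,
          Real.exp (-(n₁ : ℝ) * γ * |k| - (n₂ : ℝ) * γ * |k - l| - (n₃ : ℝ) * γ * |l|) =
      ((n₁ : ℝ) + n₂ + n₃) /
        (((n₁ : ℝ) + n₂) * ((n₁ : ℝ) + n₃) * ((n₂ : ℝ) + n₃) * γ ^ 2 * π ^ 2) := by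
  have hn₁ : (1:ℝ) ≤ (n₁:ℝ) := by exact_mod_cast h₁
  have hn₂ : (1:ℝ) ≤ (n₂:ℝ) := by exact_mod_cast h₂
  have hn₃ : (1:ℝ) ≤ (n₃:ℝ) := by exact_mod_cast h₃
  have ha : 0 < (n₁:ℝ) * γ := by positivity
  have hb : 0 < (n₂:ℝ) * γ := by nlinarith
  have hc : 0 < (n₃:ℝ) * γ := by nlinarith
  have hkey := key ha hb hc
  have hcongr : (∫ k : ℝ, ∫ l : ℝ,
        Real.exp (-(n₁ : ℝ) * γ * |k| - (n₂ : ℝ) * γ * |k - l| - (n₃ : ℝ) * γ * |l|))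
      = ∫ k : ℝ, ∫ l : ℝ,
        Real.exp (-(((n₁:ℝ)*γ) * |k|) - ((n₂:ℝ)*γ) * |k - l| - ((n₃:ℝ)*γ) * |l|) := by
    congr 1; funext k; congr 1; funext l; congr 1; ring
  rw [hcongr, hkey]
  have hπ : π ≠ 0 := Real.pi_ne_zero
  have hγ' : γ ≠ 0 := hγ.ne'
  have d1 : (n₁:ℝ) + n₂ ≠ 0 := by nlinarith
  have d2 : (n₁:ℝ) + n₃ ≠ 0 := by nlinarith
  have d3 : (n₂:ℝ) + n₃ ≠ 0 := by nlinarith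
  have e1 : (n₁:ℝ)*γ + (n₂:ℝ)*γ ≠ 0 := by nlinarith
  have e2 : (n₁:ℝ)*γ + (n₃:ℝ)*γ ≠ 0 := by nlinarith
  have e3 : (n₂:ℝ)*γ + (n₃:ℝ)*γ ≠ 0 := by nlinarith
  field_simp
  ring
end

section
/- For reals n₁ ≠ n₂ with n₁, n₂ > 0 and any l ∈ ℝ, one has ∫_{-∞}^{∞} exp(-n₁|k| - n₂|k-l|) dk = (2n₁/(n₁²-n₂²)) e^{-n₂|l|} - (2n₂/(n₁²-n₂²)) e^{-n₁|l|}; and for n₁ = n₂ > 0, the integral equals (1/n₁ + |l|) e^{-n₁|l|}. -/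
open MeasureTheory Set

lemma my_exp_int_Iic (c a : ℝ) (hc : 0 < c) :
    IntegrableOn (fun x : ℝ => Real.exp (c * x)) (Set.Iic a) := by
  have h := (integrable_indicator_iff measurableSet_Iic).2 (integrableOn_exp_Iic (c * a))
  have h2 := (integrable_comp_mul_left_iff ((Set.Iic (c * a)).indicator Real.exp) hc.ne').2 h
  have heq : (fun x : ℝ => ((Set.Iic (c * a)).indicator Real.exp) (c * x))
      = (Set.Iic a).indicator (fun x => Real.exp (c * x)) := by
    funext x
    simp [Set.indicator_apply, mul_le_mul_iff_right₀ hc]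
  rw [heq] at h2
  exact (integrable_indicator_iff measurableSet_Iic).1 h2

lemma my_exp_val_Iic (c a : ℝ) (hc : 0 < c) :
    ∫ x in Set.Iic a, Real.exp (c * x) = Real.exp (c * a) / c := by
  have hderiv : ∀ x ∈ Set.Iic a, HasDerivAt (fun y => Real.exp (c * y) / c)
      (Real.exp (c * x)) x := by
    intro x _
    have h := (((hasDerivAt_id x).const_mul c).exp).div_const c
    simpa [mul_comm, mul_div_assoc, hc.ne'] using h
  have htend : Filter.Tendsto (fun y => Real.exp (c * y) / c) Filter.atBot (nhds 0) := by
    have h1 : Filter.Tendsto (fun y : ℝ => c * y) Filter.atBot Filter.atBot :=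
      Filter.tendsto_id.const_mul_atBot hc
    have := (Real.tendsto_exp_atBot.comp h1).div_const c
    simpa using this
  have := integral_Iic_of_hasDerivAt_of_tendsto' hderiv (my_exp_int_Iic c a hc) htend
  simpa using this

lemma my_exp_int_Ioi (c a : ℝ) (hc : 0 < c) :
    IntegrableOn (fun x : ℝ => Real.exp (-(c * x))) (Set.Ioi a) := by
  simpa [neg_mul] using exp_neg_integrableOn_Ioi a hc

lemma my_exp_val_Ioi (c a : ℝ) (hc : 0 < c) :
    ∫ x in Set.Ioi a, Real.exp (-(c * x)) = Real.exp (-(c * a)) / c := by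
  have hderiv : ∀ x ∈ Set.Ici a, HasDerivAt (fun y => -Real.exp (-(c * y)) / c)
      (Real.exp (-(c * x))) x := by
    intro x _
    have h := ((((hasDerivAt_id x).const_mul c).neg).exp).neg.div_const c
    simpa [mul_comm, mul_div_assoc, hc.ne'] using h
  have htend : Filter.Tendsto (fun y => -Real.exp (-(c * y)) / c) Filter.atTop (nhds 0) := by
    have h1 : Filter.Tendsto (fun y : ℝ => -(c * y)) Filter.atTop Filter.atBot := by
      have : Filter.Tendsto (fun y : ℝ => c * y) Filter.atTop Filter.atTop :=
        Filter.tendsto_id.const_mul_atTop hc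
      exact Filter.tendsto_neg_atBot_iff.mpr this
    have := ((Real.tendsto_exp_atBot.comp h1).neg).div_const c
    simpa using this
  have := integral_Ioi_of_hasDerivAt_of_tendsto' hderiv (my_exp_int_Ioi c a hc) htend
  rw [this]
  ring

lemma my_interval_exp (d : ℝ) (hd : d ≠ 0) (a b : ℝ) :
    ∫ x in a..b, Real.exp (d * x) = (Real.exp (d * b) - Real.exp (d * a)) / d := by
  have hderiv : ∀ x ∈ Set.uIcc a b, HasDerivAt (fun y => Real.exp (d * y) / d)
      (Real.exp (d * x)) x := by
    intro x _
    have h := (((hasDerivAt_id x).const_mul d).exp).div_const d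
    simpa [mul_comm, mul_div_assoc, hd] using h
  have hint : IntervalIntegrable (fun x => Real.exp (d * x)) volume a b :=
    (Real.continuous_exp.comp (continuous_const.mul continuous_id)).intervalIntegrable a b
  rw [intervalIntegral.integral_eq_sub_of_hasDerivAt hderiv hint]
  ring

lemma my_key (n₁ n₂ : ℝ) (h₁ : 0 < n₁) (h₂ : 0 < n₂) (l : ℝ) (hl : 0 ≤ l) :
    (∫ k : ℝ, Real.exp (-n₁ * |k| - n₂ * |k - l|)) =
      Real.exp (-n₂ * l) / (n₁ + n₂) + Real.exp (-n₁ * l) / (n₁ + n₂)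
        + ∫ k in (0 : ℝ)..l, Real.exp (-n₂ * l) * Real.exp ((n₂ - n₁) * k) := by
  set f : ℝ → ℝ := fun k => Real.exp (-n₁ * |k| - n₂ * |k - l|) with hf
  have hc : 0 < n₁ + n₂ := by linarith
  have hIic : Set.EqOn f (fun k => Real.exp (-n₂ * l) * Real.exp ((n₁ + n₂) * k))
      (Set.Iic 0) := by
    intro x hx
    simp only [hf, ← Real.exp_add]
    congr 1
    rw [abs_of_nonpos hx.out, abs_of_nonpos (by simp at hx; linarith : x - l ≤ 0)]
    ring
  have hIoc : Set.EqOn f (fun k => Real.exp (-n₂ * l) * Real.exp ((n₂ - n₁) * k))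
      (Set.Ioc 0 l) := by
    intro x hx
    simp only [hf, ← Real.exp_add]
    congr 1
    rw [abs_of_pos hx.1, abs_of_nonpos (by linarith [hx.2] : x - l ≤ 0)]
    ring
  have hIoi : Set.EqOn f (fun k => Real.exp (n₂ * l) * Real.exp (-((n₁ + n₂) * k)))
      (Set.Ioi l) := by
    intro x hx
    simp only [hf, ← Real.exp_add]
    congr 1
    rw [abs_of_pos (lt_of_le_of_lt hl hx.out), abs_of_pos (by simp at hx; linarith : (0:ℝ) < x - l)]
    ring
  have iIic : IntegrableOn f (Set.Iic 0) :=
    IntegrableOn.congr_fun ((my_exp_int_Iic (n₁ + n₂) 0 hc).const_mul (Real.exp (-n₂ * l)))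
      (fun x hx => (hIic hx).symm) measurableSet_Iic
  have hcont : Continuous f := by
    apply Real.continuous_exp.comp
    exact (continuous_const.mul continuous_abs).sub
      (continuous_const.mul (continuous_abs.comp (continuous_id.sub continuous_const)))
  have iIoc : IntegrableOn f (Set.Ioc 0 l) := hcont.integrableOn_Ioc
  have iIoi : IntegrableOn f (Set.Ioi l) :=
    IntegrableOn.congr_fun ((my_exp_int_Ioi (n₁ + n₂) l hc).const_mul (Real.exp (n₂ * l)))
      (fun x hx => (hIoi hx).symm) measurableSet_Ioi
  have iIoi0 : IntegrableOn f (Set.Ioi 0) := by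
    rw [← Set.Ioc_union_Ioi_eq_Ioi hl]
    exact iIoc.union iIoi
  have split1 : (∫ k : ℝ, f k) = (∫ k in Set.Iic 0, f k) + ∫ k in Set.Ioi 0, f k :=
    (intervalIntegral.integral_Iic_add_Ioi iIic iIoi0).symm
  have split2 : (∫ k in Set.Ioi 0, f k)
      = (∫ k in Set.Ioc 0 l, f k) + ∫ k in Set.Ioi l, f k := by
    rw [← Set.Ioc_union_Ioi_eq_Ioi hl]
    exact setIntegral_union Set.Ioc_disjoint_Ioi_same measurableSet_Ioi iIoc iIoi
  have EIic : (∫ k in Set.Iic 0, f k) = Real.exp (-n₂ * l) / (n₁ + n₂) := by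
    rw [setIntegral_congr_fun measurableSet_Iic hIic, integral_const_mul,
      my_exp_val_Iic (n₁ + n₂) 0 hc]
    simp [neg_mul, div_eq_mul_inv]
  have EIoi : (∫ k in Set.Ioi l, f k) = Real.exp (-n₁ * l) / (n₁ + n₂) := by
    rw [setIntegral_congr_fun measurableSet_Ioi hIoi, integral_const_mul,
      my_exp_val_Ioi (n₁ + n₂) l hc, ← mul_div_assoc, ← Real.exp_add]
    ring_nf
  have EIoc : (∫ k in Set.Ioc 0 l, f k)
      = ∫ k in (0 : ℝ)..l, Real.exp (-n₂ * l) * Real.exp ((n₂ - n₁) * k) := by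
    rw [setIntegral_congr_fun measurableSet_Ioc hIoc, intervalIntegral.integral_of_le hl]
  rw [split1, split2, EIic, EIoi, EIoc]
  ring

lemma my_main (n₁ n₂ : ℝ) (h₁ : 0 < n₁) (h₂ : 0 < n₂) (l : ℝ) (hl : 0 ≤ l) :
    (n₁ ≠ n₂ →
      (∫ k : ℝ, Real.exp (-n₁ * |k| - n₂ * |k - l|)) =
        (2 * n₁ / (n₁ ^ 2 - n₂ ^ 2)) * Real.exp (-n₂ * l) -
          (2 * n₂ / (n₁ ^ 2 - n₂ ^ 2)) * Real.exp (-n₁ * l)) ∧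
    (n₁ = n₂ →
      (∫ k : ℝ, Real.exp (-n₁ * |k| - n₂ * |k - l|)) =
        (1 / n₁ + l) * Real.exp (-n₁ * l)) := by
  have key := my_key n₁ n₂ h₁ h₂ l hl
  constructor
  · intro hne
    have hd : n₂ - n₁ ≠ 0 := sub_ne_zero.mpr (Ne.symm hne)
    have hsum : n₁ + n₂ ≠ 0 := by positivity
    have hsq : n₁ ^ 2 - n₂ ^ 2 ≠ 0 := by
      intro h
      apply hd
      have : (n₁ - n₂) * (n₁ + n₂) = 0 := by ring_nf; linarith [h]
      rcases mul_eq_zero.mp this with h' | h'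
      · linarith
      · exact absurd h' hsum
    rw [key, intervalIntegral.integral_const_mul, my_interval_exp (n₂ - n₁) hd 0 l]
    have e1 : Real.exp (-n₂ * l) * Real.exp ((n₂ - n₁) * l) = Real.exp (-n₁ * l) := by
      rw [← Real.exp_add]; ring_nf
    have e0 : Real.exp ((n₂ - n₁) * (0 : ℝ)) = 1 := by simp
    rw [e0, ← mul_div_assoc, mul_sub, e1, mul_one]
    field_simp
    ring
  · intro heq
    subst heq
    have hsum : n₁ + n₁ ≠ 0 := by positivity
    rw [key]
    simp only [sub_self, zero_mul, Real.exp_zero, mul_one,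
      intervalIntegral.integral_const, smul_eq_mul, sub_zero]
    field_simp

theorem stmt_16 (n₁ n₂ : ℝ) (h₁ : 0 < n₁) (h₂ : 0 < n₂) (l : ℝ) :
    (n₁ ≠ n₂ →
      (∫ k : ℝ, Real.exp (-n₁ * |k| - n₂ * |k - l|)) =
        (2 * n₁ / (n₁ ^ 2 - n₂ ^ 2)) * Real.exp (-n₂ * |l|) -
          (2 * n₂ / (n₁ ^ 2 - n₂ ^ 2)) * Real.exp (-n₁ * |l|)) ∧
    (n₁ = n₂ →
      (∫ k : ℝ, Real.exp (-n₁ * |k| - n₂ * |k - l|)) =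
        (1 / n₁ + |l|) * Real.exp (-n₁ * |l|)) := by
  rcases le_total 0 l with hl | hl
  · rw [abs_of_nonneg hl]
    exact my_main n₁ n₂ h₁ h₂ l hl
  · have hnl : 0 ≤ -l := by linarith
    have htrans : (∫ k : ℝ, Real.exp (-n₁ * |k| - n₂ * |k - l|))
        = ∫ k : ℝ, Real.exp (-n₁ * |k| - n₂ * |k - (-l)|) := by
      rw [← integral_neg_eq_self (fun k : ℝ => Real.exp (-n₁ * |k| - n₂ * |k - (-l)|)) volume]
      congr 1
      funext x
      rw [abs_neg]
      congr 2
      rw [← abs_neg (-x - -l)]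
      congr 1
      ring
    rw [abs_of_nonpos hl, htrans]
    exact my_main n₁ n₂ h₁ h₂ (-l) hnl
end
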